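/- arXiv:math/0510144 — 5 statements merged into one kernel-verified Lean document; each statement's English description precedes it below -/
import Mathlib

section
/- Let V be a real vector space and B a symmetric bilinear form on V. Suppose x ∈ V satisfies B(x,x) > 0 and B(v,v) ≤ 0 for every v ∈ V with B(x,v) = 0. If y ∈ V satisfies B(x,y)^2 = B(x,x)·B(y,y), then the vector z = B(x,x)·y − B(x,y)·x lies in the radical of B, i.e. B(z,w) = 0 for every w ∈ V. -/
/-- Equality case of the Lorentzian Cauchy–Schwarz inequality (index theorem):
if the Gram determinant of `x` and `y` vanishes, then `B(x,x)•y − B(x,y)•x`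
lies in the radical of `B`. -/
theorem stmt_1 {V : Type*} [AddCommGroup V] [Module ℝ V]
    (B : LinearMap.BilinForm ℝ V)
    (hsymm : ∀ u v : V, B u v = B v u)
    (x : V) (hx : 0 < B x x)
    (hneg : ∀ v : V, B x v = 0 → B v v ≤ 0)
    (y : V) (heq : (B x y) ^ 2 = B x x * B y y) :
    ∀ w : V, B ((B x x) • y - (B x y) • x) w = 0 := by
  intro w
  set a := B x x with ha
  set b := B x y with hb
  set z := a • y - b • x with hz
  have expand : ∀ u v : V, B (a • u - b • v) (a • u - b • v)
      = a * a * B u u - a * b * B u v - b * a * B v u + b * b * B v v := by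
    intro u v
    simp only [map_sub, map_smul, LinearMap.sub_apply, LinearMap.smul_apply, smul_eq_mul]
    ring
  have hxz : B x z = 0 := by
    simp only [hz, map_sub, map_smul, smul_eq_mul, ← ha, ← hb]
    ring
  have hzz : B z z = 0 := by
    have := expand y x
    rw [← hz] at this
    rw [this, hsymm y x, ← ha, ← hb]
    nlinarith [heq]
  -- orthogonalize w
  set w' := a • w - (B x w) • x with hw'
  have hxw' : B x w' = 0 := by
    simp only [hw', map_sub, map_smul, smul_eq_mul, ← ha]
    ring
  have hzx : B z x = 0 := by rw [hsymm z x]; exact hxz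
  have key : B z w' = 0 := by
    -- for all t, B (z + t•w') (z + t•w') ≤ 0
    set s := B z w' with hs
    set q := B w' w' with hq
    have hqle : q ≤ 0 := hneg w' hxw'
    have hforall : ∀ t : ℝ, 0 ≤ (-q) * (t * t) + (-(2 * s)) * t + 0 := by
      intro t
      have hxv : B x (z + t • w') = 0 := by
        simp only [map_add, map_smul, smul_eq_mul, hxz, hxw']; ring
      have := hneg _ hxv
      simp only [map_add, map_smul, LinearMap.add_apply, LinearMap.smul_apply,
        smul_eq_mul] at this
      have hsym' : B w' z = s := by rw [hsymm w' z]
      rw [hzz, hsym', ← hs, ← hq] at this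
      nlinarith [this]
    have hd := discrim_le_zero hforall
    rw [discrim] at hd
    nlinarith [hd]
  -- conclude
  have : a * B z w = B z w' + (B x w) * B z x := by
    simp only [hw', map_sub, map_smul, smul_eq_mul]
    ring
  rw [key, hzx] at this
  have : a * B z w = 0 := by linarith
  have ha' : a ≠ 0 := ne_of_gt hx
  exact (mul_eq_zero.mp this).resolve_left ha'
end

section
/- Let V be a real vector space and B a symmetric bilinear form on V. Suppose x ∈ V satisfies B(x,x) > 0 and B(v,v) ≤ 0 for every v ∈ V with B(x,v) = 0. Let ω, L, Γ ∈ V satisfy B(Γ,Γ) = 0 and B(ω,ω) ≥ 0. Then 2·B(L,Γ)·B(ω,Γ)·B(ω,L) − B(ω,Γ)^2·B(L,L) − B(L,Γ)^2·B(ω,ω) ≥ 0. -/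
private lemma lemA {V : Type*} [AddCommGroup V] [Module ℝ V]
    (B : LinearMap.BilinForm ℝ V)
    (hsymm : ∀ u v : V, B u v = B v u)
    (x : V) (hx : 0 < B x x)
    (hneg : ∀ v : V, B x v = 0 → B v v ≤ 0)
    (u v : V) (hu : 0 < B u u) (hv : 0 < B v v) (huv : B u v = 0) : False := by
  have hxu : B x u ≠ 0 := fun h => absurd (hneg u h) (not_le.mpr hu)
  have h := hneg (B x u • v - B x v • u) (by
    simp [map_sub, map_smul, smul_eq_mul]
    ring)
  simp only [map_sub, map_smul, LinearMap.sub_apply, LinearMap.smul_apply, smul_eq_mul] at h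
  have hvu : B v u = 0 := (hsymm v u).trans huv
  rw [huv, hvu] at h
  nlinarith [mul_pos (sq_pos_of_ne_zero hxu) hv, mul_nonneg (sq_nonneg (B x v)) hu.le]

private lemma lemB {V : Type*} [AddCommGroup V] [Module ℝ V]
    (B : LinearMap.BilinForm ℝ V)
    (hsymm : ∀ u v : V, B u v = B v u)
    (x : V) (hx : 0 < B x x)
    (hneg : ∀ v : V, B x v = 0 → B v v ≤ 0)
    (Γ w u : V) (hΓ : B Γ Γ = 0) (huΓ : B u Γ = 0) (hw : B Γ w ≠ 0) :
    B u u ≤ 0 := by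
  by_contra h
  push_neg at h
  set p := B u u • w - B u w • u with hp
  have hΓu : B Γ u = 0 := (hsymm Γ u).trans huΓ
  have hup : B u p = 0 := by
    simp [hp, map_sub, map_smul, smul_eq_mul]
    ring
  have hpu : B p u = 0 := (hsymm p u).trans hup
  have hpΓ : B p Γ = B u u * B w Γ := by
    simp [hp, map_sub, map_smul, LinearMap.sub_apply, LinearMap.smul_apply, smul_eq_mul, huΓ]
  have hwΓ : B w Γ ≠ 0 := fun hh => hw ((hsymm Γ w).trans hh)
  have hpΓ' : B p Γ ≠ 0 := by
    rw [hpΓ]; exact mul_ne_zero (ne_of_gt h) hwΓ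
  set t : ℝ := -(B p Γ) / (1 + (B p p)^2) with ht
  set z := t • p - Γ with hz
  have huz : B u z = 0 := by
    simp [hz, map_sub, map_smul, smul_eq_mul, huΓ, hup]
  have hΓp : B Γ p = B p Γ := hsymm Γ p
  have hzz : B z z = t^2 * B p p - 2 * t * B p Γ := by
    simp [hz, map_sub, map_smul, LinearMap.sub_apply, LinearMap.smul_apply, smul_eq_mul, hΓ, hΓp]
    ring
  have hd : (0:ℝ) < 1 + (B p p)^2 := by positivity
  have hc : (0:ℝ) < (B p Γ)^2 := by positivity
  have hzpos : 0 < B z z := by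
    rw [hzz]
    have key : t^2 * B p p - 2 * t * B p Γ
        = (B p Γ)^2 * (B p p + 2 * (1 + (B p p)^2)) / (1 + (B p p)^2)^2 := by
      rw [ht]
      field_simp
      ring
    rw [key]
    apply div_pos _ (by positivity)
    have h2 : 0 < B p p + 2 * (1 + (B p p)^2) := by
      nlinarith [sq_nonneg (4 * B p p + 1)]
    exact mul_pos hc h2
  exact lemA B hsymm x hx hneg u z h hzpos huz

/-- The instance of the algebraic index theorem used in the main theorem:
for a Lorentzian symmetric bilinear form `B`, if `B(Γ,Γ) = 0` and `B(ω,ω) ≥ 0`,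
then the Gram determinant of `ω`, `L`, `Γ` is nonnegative. -/
theorem stmt_4 {V : Type*} [AddCommGroup V] [Module ℝ V]
    (B : LinearMap.BilinForm ℝ V)
    (hsymm : ∀ u v : V, B u v = B v u)
    (x : V) (hx : 0 < B x x)
    (hneg : ∀ v : V, B x v = 0 → B v v ≤ 0)
    (ω L Γ : V) (hΓ : B Γ Γ = 0) (hω : 0 ≤ B ω ω) :
    0 ≤ 2 * B L Γ * B ω Γ * B ω L - (B ω Γ) ^ 2 * B L L - (B L Γ) ^ 2 * B ω ω := by
  set u := B L Γ • ω - B ω Γ • L with hu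
  have hLω : B L ω = B ω L := hsymm L ω
  have huu : B u u = (B L Γ)^2 * B ω ω - 2 * B L Γ * B ω Γ * B ω L + (B ω Γ)^2 * B L L := by
    simp [hu, map_sub, map_smul, LinearMap.sub_apply, LinearMap.smul_apply, smul_eq_mul, hLω]
    ring
  have huΓ : B u Γ = 0 := by
    simp [hu, map_sub, map_smul, LinearMap.sub_apply, LinearMap.smul_apply, smul_eq_mul]
    ring
  by_cases hq : B Γ ω = 0
  · by_cases hr : B Γ L = 0
    · have h1 : B ω Γ = 0 := (hsymm ω Γ).trans hq
      have h2 : B L Γ = 0 := (hsymm L Γ).trans hr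
      simp [h1, h2]
    · have := lemB B hsymm x hx hneg Γ L u hΓ huΓ hr
      linarith [huu ▸ this]
  · have := lemB B hsymm x hx hneg Γ ω u hΓ huΓ hq
    linarith [huu ▸ this]
end

section
/- Let g, γ, w, d, p, q be real numbers satisfying: γ > 1, g > γ, w ≥ 0, γ·w ≥ 4(γ−1)·d, and 2(g−2γ+1)(2γ−2)·p − (2γ−2)^2·q ≥ (g−2γ+1)^2·w. Then 2w + 4p + 2q − (4(g−1)/(g−γ))·(2d + q/2 + p/2) ≥ ((g−4γ−1)(g−1)/(2(g−γ)(γ−1)))·w. -/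
/-- Arithmetic core of the proof of the main theorem (inequality (fond)):
`w = (ω_α·ω_α)`, `d = deg α_*ω_α`, `p = (𝓛·ω_α)`, `q = (𝓛·𝓛)`. -/
theorem stmt_6 (g γ w d p q : ℝ) (hγ : 1 < γ) (hg : γ < g) (hw : 0 ≤ w)
    (hslope : 4 * (γ - 1) * d ≤ γ * w)
    (hindex : (g - 2 * γ + 1) ^ 2 * w ≤
      2 * (g - 2 * γ + 1) * (2 * γ - 2) * p - (2 * γ - 2) ^ 2 * q) :
    ((g - 4 * γ - 1) * (g - 1) / (2 * (g - γ) * (γ - 1))) * w ≤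
      2 * w + 4 * p + 2 * q - (4 * (g - 1) / (g - γ)) * (2 * d + q / 2 + p / 2) := by
  have h1 : (0:ℝ) < g - γ := by linarith
  have h2 : (0:ℝ) < γ - 1 := by linarith
  have hD : (0:ℝ) < 2 * (g - γ) * (γ - 1) := by positivity
  have hslope' : 4 * (g - 1) * (4 * (γ - 1) * d) ≤ 4 * (g - 1) * (γ * w) :=
    mul_le_mul_of_nonneg_left hslope (by linarith)
  have key : 0 ≤ (2 * w + 4 * p + 2 * q) * (2 * (g - γ) * (γ - 1))
      - 8 * (g - 1) * (γ - 1) * (2 * d + q / 2 + p / 2)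
      - (g - 4 * γ - 1) * (g - 1) * w := by nlinarith [hindex, hslope', hw]
  rw [← sub_nonneg]
  have heq : 2 * w + 4 * p + 2 * q - 4 * (g - 1) / (g - γ) * (2 * d + q / 2 + p / 2)
      - (g - 4 * γ - 1) * (g - 1) / (2 * (g - γ) * (γ - 1)) * w
      = ((2 * w + 4 * p + 2 * q) * (2 * (g - γ) * (γ - 1))
        - 8 * (g - 1) * (γ - 1) * (2 * d + q / 2 + p / 2)
        - (g - 4 * γ - 1) * (g - 1) * w) / (2 * (g - γ) * (γ - 1)) := by
    field_simp
    ring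
  rw [heq]
  positivity
end

section
/- Let g, γ, w, d, p, q be real numbers satisfying: γ > 1, g > 4γ + 1, w ≥ 0, γ·w ≥ 4(γ−1)·d, 2(g−2γ+1)(2γ−2)·p − (2γ−2)^2·q ≥ (g−2γ+1)^2·w, and the equality 2w + 4p + 2q = (4(g−1)/(g−γ))·(2d + q/2 + p/2). Then w = 0, d = 0, and (g−2γ+1)·p = (γ−1)·q. -/
set_option maxHeartbeats 1000000 in
/-- Numerical content of the characterization of fibrations attaining the bound:
equality of the slope with `4(g−1)/(g−γ)` forces `w = d = 0` (local triviality of `α`)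
and the relation `(g−2γ+1)·p = (γ−1)·q`. -/
theorem stmt_8 (g γ w d p q : ℝ) (hγ : 1 < γ) (hg : 4 * γ + 1 < g) (hw : 0 ≤ w)
    (hslope : 4 * (γ - 1) * d ≤ γ * w)
    (hindex : (g - 2 * γ + 1) ^ 2 * w ≤
      2 * (g - 2 * γ + 1) * (2 * γ - 2) * p - (2 * γ - 2) ^ 2 * q)
    (heq : 2 * w + 4 * p + 2 * q =
      (4 * (g - 1) / (g - γ)) * (2 * d + q / 2 + p / 2)) :
    w = 0 ∧ d = 0 ∧ (g - 2 * γ + 1) * p = (γ - 1) * q := by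
  have hgγ : (0:ℝ) < g - γ := by nlinarith
  have hE : 2 * (g - γ) * w + 2 * ((g - 2*γ+1) * p - (γ-1) * q) = 8 * (g-1) * d := by
    rw [div_mul_eq_mul_div, eq_div_iff hgγ.ne'] at heq
    linear_combination heq
  -- (γ-1) * A ≤ (g + γ^2 - 2γ) * w
  have hs : (γ - 1) * ((g - 2*γ+1) * p - (γ-1) * q) ≤ (g + γ^2 - 2*γ) * w := by
    nlinarith [hslope, hE, hgγ]
  have hiA : (g - 2*γ+1)^2 * w ≤ 4 * (γ-1) * ((g - 2*γ+1) * p - (γ-1) * q) := by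
    nlinarith [hindex]
  have hw0 : w = 0 := by
    nlinarith [mul_pos (show (0:ℝ) < g - 1 by nlinarith) (show (0:ℝ) < g - (4*γ+1) by nlinarith), hs, hiA]
  have hA : (g - 2*γ+1) * p - (γ-1) * q = 0 := by
    have h1 : 0 ≤ 4 * (γ-1) * ((g - 2*γ+1) * p - (γ-1) * q) := by nlinarith [hiA]
    nlinarith [hs, h1]
  refine ⟨hw0, ?_, by linarith⟩
  nlinarith [hE, hw0, hA]
end

section
/- Let V be a real vector space and B a symmetric bilinear form on V. Let ω, L, Γ ∈ V and let g, γ, d be real numbers with γ > 1 and g > γ. Assume: B(Γ,Γ) = 0, B(ω,Γ) = 2γ − 2, B(L,Γ) = g − 2γ + 1, B(ω,ω) ≥ 0, γ·B(ω,ω) ≥ 4(γ−1)·d, and there exists x ∈ V with B(x,x) > 0 such that B(v,v) ≤ 0 for every v ∈ V with B(x,v) = 0. Then 2B(ω,ω) + 4B(ω,L) + 2B(L,L) − (4(g−1)/(g−γ))·(2d + B(L,L)/2 + B(ω,L)/2) ≥ ((g−4γ−1)(g−1)/(2(g−γ)(γ−1)))·B(ω,ω). -/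
/-- Combination of the index theorem and the slope inequality as in the proof of
the main theorem: `B` is the intersection form, `ω = ω_α`, `L = 𝓛`, `Γ` a fiber. -/
theorem stmt_9 {V : Type*} [AddCommGroup V] [Module ℝ V]
    (B : LinearMap.BilinForm ℝ V)
    (hsymm : ∀ u v : V, B u v = B v u)
    (ω L Γ : V) (g γ d : ℝ) (hγ : 1 < γ) (hg : γ < g)
    (hΓΓ : B Γ Γ = 0) (hωΓ : B ω Γ = 2 * γ - 2) (hLΓ : B L Γ = g - 2 * γ + 1)
    (hωω : 0 ≤ B ω ω) (hslope : 4 * (γ - 1) * d ≤ γ * B ω ω)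
    (hlorentz : ∃ x : V, 0 < B x x ∧ ∀ v : V, B x v = 0 → B v v ≤ 0) :
    ((g - 4 * γ - 1) * (g - 1) / (2 * (g - γ) * (γ - 1))) * B ω ω ≤
      2 * B ω ω + 4 * B ω L + 2 * B L L -
        (4 * (g - 1) / (g - γ)) * (2 * d + B L L / 2 + B ω L / 2) := by
  obtain ⟨x, hx, hneg⟩ := hlorentz
  -- Key consequence of the index theorem: anything orthogonal to Γ has B v v ≤ 0
  have hΓperp : ∀ v : V, B v Γ = 0 → B v v ≤ 0 := by
    intro v hvΓ
    by_contra hpos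
    push_neg at hpos
    -- Step A: B x Γ = 0
    have hxΓ : B x Γ = 0 := by
      by_contra hne
      have hw := hneg (B x Γ • v - B x v • Γ) (by
        simp only [map_sub, map_smul, LinearMap.sub_apply, LinearMap.smul_apply,
          smul_eq_mul]
        ring)
      simp only [map_sub, map_smul, LinearMap.sub_apply, LinearMap.smul_apply,
        smul_eq_mul] at hw
      rw [hvΓ, hsymm Γ v, hvΓ, hΓΓ] at hw
      have hne2 : 0 < B x Γ * B x Γ := mul_self_pos.mpr hne
      nlinarith [hw, hpos, hne2]
    -- Step B: contradiction using ω
    set w0 : V := B x x • ω - B x ω • x with hw0def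
    have hxw0 : B x w0 = 0 := by
      simp only [hw0def, map_sub, map_smul, smul_eq_mul]
      ring
    have hc2 : B w0 w0 ≤ 0 := hneg w0 hxw0
    set c1 : ℝ := B Γ w0 with hc1def
    have hc1pos : 0 < c1 := by
      have : c1 = B x x * (2 * γ - 2) := by
        simp only [hc1def, hw0def, map_sub, map_smul, smul_eq_mul]
        rw [hsymm Γ ω, hωΓ, hsymm Γ x, hxΓ]
        ring
      rw [this]
      have : 0 < 2 * γ - 2 := by linarith
      positivity
    set t : ℝ := c1 / (1 - B w0 w0) with htdef
    have hden : 0 < 1 - B w0 w0 := by linarith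
    have ht : t * (1 - B w0 w0) = c1 := by
      rw [htdef]; field_simp
    have hval := hneg (Γ + t • w0) (by
      simp only [map_add, map_smul, smul_eq_mul, hxΓ, hxw0]; ring)
    simp only [map_add, map_smul, LinearMap.add_apply, LinearMap.smul_apply,
      smul_eq_mul] at hval
    rw [hΓΓ, hsymm w0 Γ, ← hc1def] at hval
    -- hval : 0 + t * c1 + (t * c1 + t * (t * B w0 w0)) ≤ 0
    nlinarith [hval, ht, hc2, sq_nonneg t, hc1pos]
  -- Apply it to v₀ = (g - 2γ + 1) • ω - (2γ - 2) • L
  have hkey := hΓperp ((g - 2 * γ + 1) • ω - (2 * γ - 2) • L) (by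
    simp only [map_sub, map_smul, LinearMap.sub_apply, LinearMap.smul_apply,
      smul_eq_mul]
    rw [hωΓ, hLΓ]; ring)
  simp only [map_sub, map_smul, LinearMap.sub_apply, LinearMap.smul_apply,
    smul_eq_mul] at hkey
  rw [hsymm L ω] at hkey
  -- hkey : quadratic combination ≤ 0
  have hP : (0:ℝ) < g - γ := by linarith
  have hQ : (0:ℝ) < γ - 1 := by linarith
  have h1 : 0 ≤ 4 * (g - 1) * (γ * B ω ω - 4 * (γ - 1) * d) :=
    mul_nonneg (by linarith) (by linarith)
  rw [← sub_nonneg]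
  have hid : 2 * B ω ω + 4 * B ω L + 2 * B L L -
        (4 * (g - 1) / (g - γ)) * (2 * d + B L L / 2 + B ω L / 2) -
        ((g - 4 * γ - 1) * (g - 1) / (2 * (g - γ) * (γ - 1))) * B ω ω =
      (4 * (g - 1) * (γ * B ω ω - 4 * (γ - 1) * d) -
        ((g - 2 * γ + 1) ^ 2 * B ω ω -
          2 * (g - 2 * γ + 1) * (2 * γ - 2) * B ω L +
          (2 * γ - 2) ^ 2 * B L L)) / (2 * (g - γ) * (γ - 1)) := by
    field_simp
    ring
  rw [hid]
  apply div_nonneg _ (by positivity)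
  nlinarith [hkey, h1]
end
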